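/- arXiv:1506.07495 — 5 statements merged into one kernel-verified Lean document; each statement's English description precedes it below -/
import Mathlib

section
/- Let V be a finite-dimensional complex vector space and (ρ_k) a sequence of invertible linear maps V → V. Then there exists a subsequence (ρ_{k_j}) such that for every nonzero x ∈ V, the sequence of points [ρ_{k_j}(x)] in the projective space ℙ(V) converges. -/
/-!
Normalise the maps `ρ_k` to operator norm one and extract a subsequence converging to some
`A ≠ 0`. For `x ∉ ker A` the rescaled images `ρ_k x / ‖ρ_k‖` tend to `A x ≠ 0`. The kernel of
`A` has smaller dimension and the `ρ_k` are still injective on it, so by induction on the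
dimension a further subsequence handles the nonzero vectors of `ker A` as well.
-/

open Filter Topology

section ProjectiveConvergence

variable {𝕜 : Type*} [RCLike 𝕜]

/-- Convergence of the lines `[u j]` in `ℙ(F)`, phrased through rescaled representatives. -/
def ConvergesProjectively {F : Type*} [NormedAddCommGroup F] [NormedSpace 𝕜 F]
    (u : ℕ → F) : Prop :=
  ∃ y : F, y ≠ 0 ∧ ∃ c : ℕ → 𝕜, (∀ j, c j ≠ 0) ∧ Tendsto (fun j => c j • u j) atTop (𝓝 y)

variable {E F : Type*} [NormedAddCommGroup E] [NormedSpace 𝕜 E]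
  [NormedAddCommGroup F] [NormedSpace 𝕜 F]

theorem ConvergesProjectively.comp_strictMono {u : ℕ → F}
    (hu : ConvergesProjectively (𝕜 := 𝕜) u) {φ : ℕ → ℕ} (hφ : StrictMono φ) :
    ConvergesProjectively (𝕜 := 𝕜) (u ∘ φ) := by
  obtain ⟨y, hy, c, hc, hlim⟩ := hu
  exact ⟨y, hy, c ∘ φ, fun j => hc (φ j), hlim.comp hφ.tendsto_atTop⟩

theorem convergesProjectively_apply_of_tendsto_smul {f : ℕ → E →L[𝕜] F} {A : E →L[𝕜] F}
    {c : ℕ → 𝕜} (hc : ∀ k, c k ≠ 0) (hlim : Tendsto (fun k => c k • f k) atTop (𝓝 A))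
    {x : E} (hAx : A x ≠ 0) :
    ConvergesProjectively (𝕜 := 𝕜) (fun k => f k x) :=
  ⟨A x, hAx, c, hc, ((ContinuousLinearMap.apply 𝕜 F x).continuous.tendsto A).comp hlim⟩

theorem exists_tendsto_inv_norm_smul_subseq [FiniteDimensional 𝕜 E] [FiniteDimensional 𝕜 F]
    {f : ℕ → E →L[𝕜] F} (hf : ∀ k, f k ≠ 0) :
    ∃ A : E →L[𝕜] F, A ≠ 0 ∧ ∃ ψ : ℕ → ℕ, StrictMono ψ ∧
      Tendsto (fun k => ((‖f (ψ k)‖ : 𝕜))⁻¹ • f (ψ k)) atTop (𝓝 A) := by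
  have := FiniteDimensional.proper_rclike 𝕜 (E →L[𝕜] F)
  have hsphere : ∀ k, ((‖f k‖ : 𝕜))⁻¹ • f k ∈ Metric.sphere (0 : E →L[𝕜] F) 1 := fun k =>
    mem_sphere_zero_iff_norm.mpr (norm_smul_inv_norm (hf k))
  obtain ⟨A, hA, ψ, hψ, hlim⟩ := (isCompact_sphere (0 : E →L[𝕜] F) 1).tendsto_subseq hsphere
  exact ⟨A, ne_zero_of_mem_unit_sphere ⟨A, hA⟩, ψ, hψ, hlim⟩

theorem exists_subseq_convergesProjectively_apply [FiniteDimensional 𝕜 E]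
    [FiniteDimensional 𝕜 F] (f : ℕ → E →L[𝕜] F) (hf : ∀ k, Function.Injective (f k)) :
    ∃ φ : ℕ → ℕ, StrictMono φ ∧
      ∀ x : E, x ≠ 0 → ConvergesProjectively (𝕜 := 𝕜) (fun j => f (φ j) x) := by
  induction hd : Module.finrank 𝕜 E using Nat.strong_induction_on generalizing E with
  | _ d ih =>
  rcases subsingleton_or_nontrivial E with hE | hE
  · exact ⟨id, strictMono_id, fun x hx => absurd (Subsingleton.elim x 0) hx⟩
  obtain ⟨x₀, hx₀⟩ := exists_ne (0 : E)
  have hf0 : ∀ k, f k ≠ 0 := fun k h => hx₀ (hf k (by simp [h]))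
  obtain ⟨A, hA, ψ, hψ, hlim⟩ := exists_tendsto_inv_norm_smul_subseq hf0
  set K := LinearMap.ker (A : E →ₗ[𝕜] F)
  have hK : Module.finrank 𝕜 K < d := by
    refine hd ▸ Submodule.finrank_lt fun htop => hA ?_
    ext x
    exact LinearMap.mem_ker.mp (htop ▸ Submodule.mem_top : x ∈ K)
  obtain ⟨φ, hφ, hconvK⟩ := ih _ hK (fun k => (f (ψ k)).comp K.subtypeL)
    (fun k => (hf (ψ k)).comp Subtype.val_injective) rfl
  refine ⟨ψ ∘ φ, hψ.comp hφ, fun x hx => ?_⟩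
  by_cases hxK : x ∈ K
  · exact hconvK ⟨x, hxK⟩ (by simpa using hx)
  · have hc : ∀ k, ((‖f (ψ k)‖ : 𝕜))⁻¹ ≠ 0 := fun k => by simpa using hf0 (ψ k)
    exact (convergesProjectively_apply_of_tendsto_smul hc hlim hxK).comp_strictMono hφ

end ProjectiveConvergence

/-- Given a sequence of invertible linear maps of a finite-dimensional complex vector
space, there is a subsequence along which the images `[ρ_{k_j}(x)]` converge in
projective space for every nonzero `x`; convergence in `ℙ(V)` is expressed by the
existence of nonzero scalars `c_j` and a nonzero limit `y` with `c_j • ρ_{k_j}(x) → y`. -/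
theorem stmt_2 {V : Type*} [NormedAddCommGroup V] [NormedSpace ℂ V]
    [FiniteDimensional ℂ V] (ρ : ℕ → V ≃ₗ[ℂ] V) :
    ∃ φ : ℕ → ℕ, StrictMono φ ∧
      ∀ x : V, x ≠ 0 → ∃ y : V, y ≠ 0 ∧ ∃ c : ℕ → ℂ, (∀ j, c j ≠ 0) ∧
        Tendsto (fun j => c j • (ρ (φ j) x)) atTop (𝓝 y) := by
  obtain ⟨φ, hφ, hconv⟩ := exists_subseq_convergesProjectively_apply
    (fun k => LinearMap.toContinuousLinearMap (ρ k : V →ₗ[ℂ] V)) (fun k => (ρ k).injective)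
  exact ⟨φ, hφ, hconv⟩
end

section
/- Let P ⊂ ℝⁿ be a compact convex set containing 0 in its interior. Then there exists a ∈ ℝⁿ such that ∫_P x e^{a·x} dx = 0 (the vector-valued integral vanishes). -/
/-!
The function `F a = ∫_P exp ⟪a, x⟫` is differentiable with gradient `∫_P exp ⟪a, x⟫ • x`
(differentiation under the integral sign, dominated on the compact set `P`). If `P` contains
the ball `closedBall 0 (3 s)`, then for every `a` it contains the ball of radius `s` around a
point `c` with `‖c‖ ≤ 2 s` and `⟪a, c⟫ = 2 s ‖a‖`, on which `⟪a, x⟫ ≥ s ‖a‖`. Hence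
`F a ≥ vol (closedBall 0 s) * exp (s ‖a‖)`, so `F` tends to infinity at infinity, attains a global
minimum, and its gradient vanishes there.
-/

open MeasureTheory RealInnerProductSpace Metric Filter InnerProductSpace

variable {E : Type*} [NormedAddCommGroup E] [InnerProductSpace ℝ E]

theorem IsLocalMin.hasGradientAt_eq_zero [CompleteSpace E] {f : E → ℝ} {g a : E}
    (h : IsLocalMin f a) (hf : HasGradientAt f g a) : g = 0 :=
  (toDual ℝ E).map_eq_zero_iff.1 (h.hasFDerivAt_eq_zero hf)

theorem hasGradientAt_exp_inner [CompleteSpace E] (x a : E) :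
    HasGradientAt (fun a => Real.exp ⟪a, x⟫) (Real.exp ⟪a, x⟫ • x) a := by
  have := ((toDual ℝ E x).hasFDerivAt (x := a)).exp
  simp only [toDual_apply_apply, real_inner_comm _ x] at this
  rw [hasGradientAt_iff_hasFDerivAt, map_smul]
  exact this

variable [FiniteDimensional ℝ E] [MeasurableSpace E] [BorelSpace E] {μ : Measure E} {P : Set E}

section FiniteOnCompacts

variable [IsFiniteMeasureOnCompacts μ]

theorem hasGradientAt_setIntegral_exp_inner (hP : IsCompact P) (a₀ : E) :
    HasGradientAt (fun a => ∫ x in P, Real.exp ⟪a, x⟫ ∂μ)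
      (∫ x in P, Real.exp ⟪a₀, x⟫ • x ∂μ) a₀ := by
  have hcont : Continuous fun p : E × E => Real.exp ⟪p.1, p.2⟫ • p.2 := by fun_prop
  obtain ⟨C, hC⟩ := ((isCompact_closedBall a₀ 1).prod hP).exists_bound_of_continuousOn
    hcont.continuousOn
  have : IsFiniteMeasure (μ.restrict P) := isFiniteMeasure_restrict.2 hP.measure_lt_top.ne
  have hint : Integrable (fun x => Real.exp ⟪a₀, x⟫ • x) (μ.restrict P) :=
    (hcont.comp (Continuous.prodMk_right a₀)).continuousOn.integrableOn_compact hP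
  have key := hasFDerivAt_integral_of_dominated_of_fderiv_le (μ := μ.restrict P)
    (F := fun a x => Real.exp ⟪a, x⟫) (F' := fun a x => toDual ℝ E (Real.exp ⟪a, x⟫ • x))
    (bound := fun _ => C) (closedBall_mem_nhds a₀ one_pos)
    (.of_forall fun a =>
      (by fun_prop : Continuous fun x : E => Real.exp ⟪a, x⟫).aestronglyMeasurable)
    ((by fun_prop : Continuous fun x : E => Real.exp ⟪a₀, x⟫).continuousOn.integrableOn_compact hP)
    ((toDual ℝ E).continuous.comp_aestronglyMeasurable hint.aestronglyMeasurable)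
    (ae_restrict_of_forall_mem hP.measurableSet fun x hx a ha => by
      simpa only [LinearIsometryEquiv.norm_map] using hC (a, x) ⟨ha, hx⟩)
    (integrable_const C)
    (.of_forall fun x a _ => hasGradientAt_exp_inner x a)
  have hcomm : ∫ x in P, toDual ℝ E (Real.exp ⟪a₀, x⟫ • x) ∂μ
      = toDual ℝ E (∫ x in P, Real.exp ⟪a₀, x⟫ • x ∂μ) :=
    (toDual ℝ E).toLinearIsometry.toContinuousLinearMap.integral_comp_commSL (by simp) hint
  rwa [hcomm] at key

theorem measureReal_closedBall_mul_exp_le_setIntegral_exp_inner (hP : IsCompact P)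
    {c : E} {s : ℝ} (hcs : closedBall c s ⊆ P) (a : E) :
    μ.real (closedBall c s) * Real.exp (⟪a, c⟫ - s * ‖a‖) ≤ ∫ x in P, Real.exp ⟪a, x⟫ ∂μ := by
  have hlow : ∀ x ∈ closedBall c s, ⟪a, c⟫ - s * ‖a‖ ≤ ⟪a, x⟫ := by
    intro x hx
    have hcx : ‖c - x‖ ≤ s := by rwa [← dist_eq_norm, dist_comm]
    have := real_inner_le_norm a (c - x)
    rw [inner_sub_right] at this
    nlinarith [norm_nonneg a]
  have hint : IntegrableOn (fun x => Real.exp ⟪a, x⟫) P μ :=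
    (by fun_prop : Continuous fun x : E => Real.exp ⟪a, x⟫).continuousOn.integrableOn_compact hP
  calc μ.real (closedBall c s) * Real.exp (⟪a, c⟫ - s * ‖a‖)
      = ∫ x in closedBall c s, Real.exp (⟪a, c⟫ - s * ‖a‖) ∂μ := by
        rw [setIntegral_const, smul_eq_mul]
    _ ≤ ∫ x in closedBall c s, Real.exp ⟪a, x⟫ ∂μ :=
        setIntegral_mono_on (integrableOn_const measure_closedBall_lt_top.ne)
          (hint.mono_set hcs) measurableSet_closedBall fun x hx => Real.exp_le_exp.2 (hlow x hx)
    _ ≤ ∫ x in P, Real.exp ⟪a, x⟫ ∂μ :=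
        setIntegral_mono_set hint (.of_forall fun x => (Real.exp_pos _).le) (.of_forall hcs)

end FiniteOnCompacts

variable [μ.IsAddHaarMeasure]

theorem measureReal_closedBall_zero_mul_exp_le_setIntegral_exp_inner (hP : IsCompact P) {s : ℝ}
    (hs : 0 ≤ s) (hsP : closedBall 0 (3 * s) ⊆ P) (a : E) :
    μ.real (closedBall 0 s) * Real.exp (s * ‖a‖) ≤ ∫ x in P, Real.exp ⟪a, x⟫ ∂μ := by
  set c : E := (2 * s / ‖a‖) • a
  have hc : ‖c‖ ≤ 2 * s := by
    rcases eq_or_ne a 0 with rfl | ha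
    · simp [c, hs]
    · rw [norm_smul, Real.norm_of_nonneg (by positivity),
        div_mul_cancel₀ _ (norm_ne_zero_iff.2 ha)]
  have hac : ⟪a, c⟫ = 2 * s * ‖a‖ := by
    rcases eq_or_ne a 0 with rfl | ha
    · simp [c]
    · rw [real_inner_smul_right, real_inner_self_eq_norm_sq]
      field_simp [norm_ne_zero_iff.2 ha]
  have hcs : closedBall c s ⊆ P := (closedBall_subset_closedBall' (by
    rw [dist_zero_right]; linarith)).trans hsP
  have := measureReal_closedBall_mul_exp_le_setIntegral_exp_inner (μ := μ) hP hcs a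
  rwa [hac, measureReal_def, Measure.addHaar_closedBall_center, ← measureReal_def,
    show 2 * s * ‖a‖ - s * ‖a‖ = s * ‖a‖ by ring] at this

theorem tendsto_setIntegral_exp_inner_cocompact (hP : IsCompact P) (h0 : (0 : E) ∈ interior P) :
    Tendsto (fun a => ∫ x in P, Real.exp ⟪a, x⟫ ∂μ) (cocompact E) atTop := by
  obtain ⟨ε, hε, hεP⟩ := nhds_basis_closedBall.mem_iff.1 (mem_interior_iff_mem_nhds.1 h0)
  have hs : 0 < ε / 3 := by positivity
  have hμ : 0 < μ.real (closedBall 0 (ε / 3)) :=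
    ENNReal.toReal_pos (measure_closedBall_pos μ 0 hs).ne' measure_closedBall_lt_top.ne
  refine tendsto_atTop_mono (measureReal_closedBall_zero_mul_exp_le_setIntegral_exp_inner hP
    hs.le (by rwa [mul_div_cancel₀ _ three_ne_zero])) ?_
  exact (Real.tendsto_exp_atTop.comp
    (tendsto_norm_cocompact_atTop.const_mul_atTop hs)).const_mul_atTop hμ

theorem exists_setIntegral_exp_inner_smul_eq_zero (hP : IsCompact P) (h0 : (0 : E) ∈ interior P) :
    ∃ a : E, ∫ x in P, Real.exp ⟪a, x⟫ • x ∂μ = 0 := by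
  have hF := hasGradientAt_setIntegral_exp_inner (μ := μ) hP
  obtain ⟨a, ha⟩ := (continuous_iff_continuousAt.2 fun a => (hF a).hasFDerivAt.continuousAt)
    |>.exists_forall_le (tendsto_setIntegral_exp_inner_cocompact hP h0)
  exact ⟨a, ((isMinOn_univ_iff.2 ha).isLocalMin univ_mem).hasGradientAt_eq_zero (hF a)⟩

theorem stmt_7_general (n : ℕ) (P : Set (EuclideanSpace ℝ (Fin n)))
    (hPc : IsCompact P)
    (hPint : (0 : EuclideanSpace ℝ (Fin n)) ∈ interior P) :
    ∃ a : EuclideanSpace ℝ (Fin n),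
      ∫ x in P, Real.exp ⟪a, x⟫ • x = (0 : EuclideanSpace ℝ (Fin n)) :=
  exists_setIntegral_exp_inner_smul_eq_zero hPc hPint

/-- Tian–Zhu: for a compact convex `P ⊂ ℝⁿ` with `0` in its interior, there exists
`a ∈ ℝⁿ` with `∫_P x e^{a·x} dx = 0`. -/
theorem stmt_7 (n : ℕ) (P : Set (EuclideanSpace ℝ (Fin n)))
    (hPc : IsCompact P) (hPconv : Convex ℝ P)
    (hPint : (0 : EuclideanSpace ℝ (Fin n)) ∈ interior P) :
    ∃ a : EuclideanSpace ℝ (Fin n),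
      ∫ x in P, Real.exp ⟪a, x⟫ • x = (0 : EuclideanSpace ℝ (Fin n)) :=
  stmt_7_general n P hPc hPint
end

section
/- Let P ⊂ ℝⁿ be a compact convex set containing 0 in its interior, and let P_C = (1/vol(P)) ∫_P x dx be its barycenter, assumed nonzero. Let Q be the point where the ray {-s P_C : s ≥ 0} meets the boundary of P, and let l(x) = u·x + 1 be an affine functional with l ≥ 0 on P and l(Q) = 0. Then for every c ∈ ℝⁿ with max_{x ∈ P} c·x = 1, one has c·P_C ≥ 1 - l(P_C). -/
open MeasureTheory RealInnerProductSpace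

/-- Key polytope claim for `R(M)`: if `P` is compact convex with `0 ∈ int P`,
barycenter `P_C ≠ 0`, `Q` the boundary point on the ray `-s P_C`, and
`l(x) = u·x + 1` nonnegative on `P` with `l(Q)=0`, then for every `c` with
`max_{x∈P} c·x = 1` one has `c·P_C ≥ 1 - l(P_C)`. -/
theorem stmt_8 (n : ℕ) (P : Set (EuclideanSpace ℝ (Fin n)))
    (hPc : IsCompact P) (hPconv : Convex ℝ P)
    (hPint : (0 : EuclideanSpace ℝ (Fin n)) ∈ interior P)
    (PC : EuclideanSpace ℝ (Fin n))
    (hPC : PC = ((volume P).toReal)⁻¹ • ∫ x in P, x)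
    (hPCne : PC ≠ 0)
    (Q : EuclideanSpace ℝ (Fin n)) (hQ : Q ∈ frontier P)
    (s : ℝ) (hs : 0 ≤ s) (hQray : Q = (-s) • PC)
    (u : EuclideanSpace ℝ (Fin n))
    (hl : ∀ x ∈ P, 0 ≤ ⟪u, x⟫ + 1) (hlQ : ⟪u, Q⟫ + 1 = 0) :
    ∀ c : EuclideanSpace ℝ (Fin n),
      IsGreatest ((fun x => ⟪c, x⟫) '' P) 1 → ⟪c, PC⟫ ≥ 1 - (⟪u, PC⟫ + 1) := by
  intro c hc
  have hQP : Q ∈ P := by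
    have := hQ.1
    rwa [hPc.isClosed.closure_eq] at this
  have hcQ : ⟪c, Q⟫ ≤ 1 := hc.2 ⟨Q, hQP, rfl⟩
  rw [hQray, real_inner_smul_right] at hlQ hcQ
  -- hlQ : -s * ⟪u,PC⟫ + 1 = 0, so s * ⟪u,PC⟫ = 1, s > 0
  have hs' : 0 < s := by
    rcases hs.lt_or_eq with h | h
    · exact h
    · exfalso; rw [← h] at hlQ; norm_num at hlQ
  have huPC : ⟪u, PC⟫ = 1 / s := by rw [eq_div_iff hs'.ne']; linarith
  rw [huPC]
  rw [ge_iff_le, show 1 - (1 / s + 1) = -(1/s) by ring]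
  have : -s * ⟪c, PC⟫ ≤ 1 := hcQ
  nlinarith
end

section
/- Let P ⊂ ℝⁿ be a compact convex set containing 0 in its interior, with barycenter P_C ≠ 0, and let l be the affine functional with l(0) = 1, l ≥ 0 on P, vanishing at Q = -s P_C (s > 0). Then for every t ∈ [0, 1/l(P_C)] and every c ∈ ℝⁿ, one has t·(c·P_C) + (1-t)·max_{x ∈ P} c·x ≥ 0. -/
open MeasureTheory RealInnerProductSpace

/-- Lower-bound half of Li's formula: for `t ∈ [0, 1/l(P_C)]` and every `c ∈ ℝⁿ`,
`t·(c·P_C) + (1-t)·max_{x∈P} c·x ≥ 0`. -/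
theorem stmt_15 (n : ℕ) (P : Set (EuclideanSpace ℝ (Fin n)))
    (hPc : IsCompact P) (hPconv : Convex ℝ P)
    (hPint : (0 : EuclideanSpace ℝ (Fin n)) ∈ interior P)
    (PC : EuclideanSpace ℝ (Fin n))
    (hPC : PC = ((volume P).toReal)⁻¹ • ∫ x in P, x)
    (hPCne : PC ≠ 0)
    (Q : EuclideanSpace ℝ (Fin n)) (hQ : Q ∈ frontier P)
    (s : ℝ) (hs : 0 < s) (hQray : Q = (-s) • PC)
    (u : EuclideanSpace ℝ (Fin n))
    (hl0 : ∀ x ∈ P, 0 ≤ ⟪u, x⟫ + 1) (hlQ : ⟪u, Q⟫ + 1 = 0) :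
    ∀ t : ℝ, 0 ≤ t → t ≤ (⟪u, PC⟫ + 1)⁻¹ →
      ∀ c : EuclideanSpace ℝ (Fin n),
        0 ≤ t * ⟪c, PC⟫ + (1 - t) * sSup ((fun x => ⟪c, x⟫) '' P) := by
  intro t ht0 ht1 c
  -- ⟪u, PC⟫ = 1/s
  have huQ : ⟪u, Q⟫ = -s * ⟪u, PC⟫ := by rw [hQray, real_inner_smul_right]
  have huPC : ⟪u, PC⟫ = 1 / s := by
    rw [eq_div_iff hs.ne']
    nlinarith [hlQ, huQ]
  -- Q ∈ P
  have hQP : Q ∈ P := by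
    have := frontier_subset_closure (s := P) hQ
    rwa [hPc.isClosed.closure_eq] at this
  have h0P : (0 : EuclideanSpace ℝ (Fin n)) ∈ P := interior_subset hPint
  -- bounded above
  have hbdd : BddAbove ((fun x => ⟪c, x⟫) '' P) :=
    (hPc.image (continuous_const.inner continuous_id)).bddAbove
  set M := sSup ((fun x => ⟪c, x⟫) '' P) with hM
  have hM0 : (0:ℝ) ≤ M := by
    have : ⟪c, (0:EuclideanSpace ℝ (Fin n))⟫ ≤ M :=
      le_csSup hbdd ⟨0, h0P, rfl⟩
    simpa using this
  have hQle : ⟪c, Q⟫ ≤ M := le_csSup hbdd ⟨Q, hQP, rfl⟩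
  have hcQ : ⟪c, Q⟫ = -s * ⟪c, PC⟫ := by rw [hQray, real_inner_smul_right]
  -- so ⟪c, PC⟫ ≥ -M/s
  have hcPC : -M / s ≤ ⟪c, PC⟫ := by
    rw [div_le_iff₀ hs] at *
    nlinarith [hQle, hcQ]
  -- t ≤ (1/s + 1)⁻¹
  have hts : t * (1 / s + 1) ≤ 1 := by
    rw [huPC] at ht1
    have hpos : (0:ℝ) < 1 / s + 1 := by positivity
    calc t * (1 / s + 1) ≤ (1 / s + 1)⁻¹ * (1 / s + 1) := by
          apply mul_le_mul_of_nonneg_right ht1 hpos.le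
      _ = 1 := inv_mul_cancel₀ hpos.ne'
  have ht1' : t ≤ 1 := by nlinarith [mul_le_mul_of_nonneg_left (le_of_lt hs) ht0]
  have : t * (-M / s) + (1 - t) * M ≤ t * ⟪c, PC⟫ + (1 - t) * M := by
    have := mul_le_mul_of_nonneg_left hcPC ht0
    linarith
  have key : 0 ≤ t * (-M / s) + (1 - t) * M := by
    have hs' : s ≠ 0 := hs.ne'
    have : t * (-M / s) + (1 - t) * M = M * (1 - t * (1 / s + 1)) := by
      field_simp; ring
    rw [this]
    exact mul_nonneg hM0 (by linarith)
  linarith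
end

section
/- Let μ₀,…,μ_N ∈ ℝ and define the ℝ-action on ℂ^{N+1} by λ(t)·z = (e^{μ₀ t} z₀, …, e^{μ_N t} z_N). Let Z ⊂ ℂ^{N+1} be a nonempty closed cone invariant under this action, and suppose Z is not contained in the coordinate hyperplane {z_{i₀} = 0} for some index i₀ with μ_{i₀} = max_i μ_i. Then sup_{z ∈ Z, z ≠ 0} (Σᵢ μᵢ|zᵢ|²)/(Σᵢ|zᵢ|²) = max_i μᵢ. -/
/-!
Flowing a point `z` with `z i₀ ≠ 0` by `λ(t)` rescales `|zᵢ|²` by `e^{2μᵢt}`. After dividing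
all weights by `e^{2 μ_max t}`, the weights of non-maximal coordinates decay to `0` while those of
maximal coordinates stay fixed, and `i₀` keeps the limit mass positive; so the Rayleigh quotient of
`λ(t)·z` tends to `μ_max` as `t → ∞`, while `μ_max` bounds every quotient from above.
-/

open Filter Topology Finset

noncomputable def weightedMean {ι : Type*} [Fintype ι] (μ a : ι → ℝ) : ℝ :=
  (∑ i, μ i * a i) / ∑ i, a i

namespace weightedMean

variable {ι : Type*} [Fintype ι] (μ : ι → ℝ)

theorem le_of_forall_le {a : ι → ℝ} {M : ℝ} (ha : ∀ i, 0 ≤ a i) (hpos : 0 < ∑ i, a i)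
    (hM : ∀ i, μ i ≤ M) : weightedMean μ a ≤ M := by
  rw [weightedMean, div_le_iff₀ hpos, mul_sum]
  exact sum_le_sum fun i _ => mul_le_mul_of_nonneg_right (hM i) (ha i)

theorem const_mul {c : ℝ} (hc : c ≠ 0) (a : ι → ℝ) :
    weightedMean μ (fun i => c * a i) = weightedMean μ a := by
  simp only [weightedMean, mul_left_comm _ c, ← mul_sum]
  exact mul_div_mul_left _ _ hc

theorem eq_of_eq_on_support {a : ι → ℝ} {M : ℝ} (hsum : ∑ i, a i ≠ 0)
    (hM : ∀ i, a i ≠ 0 → μ i = M) : weightedMean μ a = M := by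
  have hterm : ∀ i, μ i * a i = M * a i := fun i => by
    by_cases hai : a i = 0
    · simp [hai]
    · rw [hM i hai]
  simp only [weightedMean, hterm, ← mul_sum]
  exact mul_div_cancel_right₀ M hsum

theorem tendsto {α : Type*} {l : Filter α} {a : α → ι → ℝ} {b : ι → ℝ}
    (ha : ∀ i, Tendsto (a · i) l (𝓝 (b i))) (hb : ∑ i, b i ≠ 0) :
    Tendsto (fun x => weightedMean μ (a x)) l (𝓝 (weightedMean μ b)) :=
  (tendsto_finsetSum _ fun i _ => (ha i).const_mul (μ i)).div
    (tendsto_finsetSum _ fun i _ => ha i) hb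

end weightedMean

theorem tendsto_exp_mul_atTop_of_nonpos {x : ℝ} (hx : x ≤ 0) :
    Tendsto (fun t => Real.exp (x * t)) atTop (𝓝 (if x = 0 then 1 else 0)) := by
  split_ifs with h
  · simp [h]
  · exact Real.tendsto_exp_atBot.comp
      (tendsto_id.const_mul_atTop_of_neg (lt_of_le_of_ne hx h))

theorem tendsto_weightedMean_exp_atTop {ι : Type*} [Fintype ι] {μ a : ι → ℝ} {M : ℝ} {i₀ : ι}
    (ha : ∀ i, 0 ≤ a i) (hM : ∀ i, μ i ≤ M) (hi₀ : μ i₀ = M) (ha₀ : 0 < a i₀) :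
    Tendsto (fun t => weightedMean μ fun i => Real.exp (μ i * t) * a i) atTop (𝓝 M) := by
  have hrescale : ∀ t, (weightedMean μ fun i => Real.exp (μ i * t) * a i) =
      weightedMean μ fun i => Real.exp ((μ i - M) * t) * a i := fun t => by
    rw [← weightedMean.const_mul μ (Real.exp_ne_zero (M * t))
      fun i => Real.exp ((μ i - M) * t) * a i]
    simp only [← mul_assoc, ← Real.exp_add, sub_mul, add_sub_cancel]
  let b : ι → ℝ := fun i => if μ i - M = 0 then a i else 0
  have hb : ∀ i, 0 ≤ b i := fun i => ite_nonneg (ha i) le_rfl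
  have hbsum : 0 < ∑ i, b i :=
    sum_pos' (fun i _ => hb i) ⟨i₀, mem_univ _, by simpa [b, hi₀] using ha₀⟩
  have hbM : weightedMean μ b = M :=
    weightedMean.eq_of_eq_on_support μ hbsum.ne' fun i hi => by
      by_contra h
      exact hi (if_neg (sub_ne_zero.mpr h))
  have hweights : ∀ i, Tendsto (fun t => Real.exp ((μ i - M) * t) * a i) atTop (𝓝 (b i)) :=
    fun i => by
      simpa [b, apply_ite (· * a i)] using
        (tendsto_exp_mul_atTop_of_nonpos (sub_nonpos.mpr (hM i))).mul_const (a i)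
  simpa only [hrescale, hbM] using weightedMean.tendsto μ hweights hbsum.ne'

theorem csSup_eq_of_tendsto {α : Type*} {S : Set ℝ} {M : ℝ} {f : α → ℝ} {l : Filter α} [l.NeBot]
    (hS : ∀ r ∈ S, r ≤ M) (hf : ∀ x, f x ∈ S) (hlim : Tendsto f l (𝓝 M)) : sSup S = M :=
  le_antisymm (csSup_le ⟨_, hf l.nonempty_of_neBot.some⟩ hS)
    (le_of_tendsto hlim (Eventually.of_forall fun x => le_csSup ⟨M, hS⟩ (hf x)))

theorem norm_sq_exp_mul (x t : ℝ) (w : ℂ) :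
    ‖(Real.exp (x * t) : ℂ) * w‖ ^ 2 = Real.exp (x * (2 * t)) * ‖w‖ ^ 2 := by
  rw [norm_mul, Complex.norm_real, Real.norm_of_nonneg (Real.exp_pos _).le, mul_pow,
    ← Real.exp_nat_mul]
  ring_nf

theorem sum_norm_sq_pos {ι E : Type*} [Fintype ι] [NormedAddCommGroup E] {z : ι → E}
    (hz : z ≠ 0) : 0 < ∑ i, ‖z i‖ ^ 2 := by
  obtain ⟨j, hj⟩ := Function.ne_iff.mp hz
  exact sum_pos' (fun i _ => by positivity) ⟨j, mem_univ _, pow_pos (norm_pos_iff.mpr hj) 2⟩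

theorem stmt_17_general (N : ℕ) (μ : Fin (N + 1) → ℝ) (Z : Set (Fin (N + 1) → ℂ))
    (hinv : ∀ t : ℝ, ∀ z ∈ Z, (fun i => (Real.exp (μ i * t) : ℂ) * z i) ∈ Z)
    (i₀ : Fin (N + 1)) (hmax : μ i₀ = Finset.univ.sup' Finset.univ_nonempty μ)
    (hnot : ∃ z ∈ Z, z i₀ ≠ 0) :
    sSup {r : ℝ | ∃ z ∈ Z, z ≠ 0 ∧
        r = (∑ i, μ i * ‖z i‖ ^ 2) / (∑ i, ‖z i‖ ^ 2)} =
      Finset.univ.sup' Finset.univ_nonempty μ := by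
  set M := Finset.univ.sup' Finset.univ_nonempty μ
  obtain ⟨z, hzZ, hz₀⟩ := hnot
  have hM : ∀ i, μ i ≤ M := fun i => le_sup' μ (mem_univ i)
  let flow : ℝ → Fin (N + 1) → ℂ := fun t i => (Real.exp (μ i * t) : ℂ) * z i
  have hflow_ne : ∀ t, flow t ≠ 0 := fun t h => hz₀ <| by
    simpa [flow, Real.exp_ne_zero] using congrFun h i₀
  have hquot : ∀ t, weightedMean μ (fun i => ‖flow t i‖ ^ 2) =
      weightedMean μ fun i => Real.exp (μ i * (2 * t)) * ‖z i‖ ^ 2 := fun t => by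
    simp only [flow, norm_sq_exp_mul]
  refine csSup_eq_of_tendsto (l := atTop) ?_
    (fun t => ⟨flow t, hinv t z hzZ, hflow_ne t, rfl⟩) ?_
  · rintro _ ⟨w, -, hw, rfl⟩
    exact weightedMean.le_of_forall_le μ (fun i => by positivity) (sum_norm_sq_pos hw) hM
  · exact (tendsto_congr hquot).mpr <|
      (tendsto_weightedMean_exp_atTop (fun i => by positivity) hM hmax
        (pow_pos (norm_pos_iff.mpr hz₀) 2)).comp
        (tendsto_id.const_mul_atTop two_pos)

/-- For a nonempty closed cone `Z ⊂ ℂ^{N+1}` invariant under the one-parameter group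
`λ(t)·z = (e^{μ₀t}z₀, …, e^{μ_N t}z_N)` and not contained in the hyperplane
`{z_{i₀} = 0}` for some index `i₀` of maximal weight, the supremum of the weighted
Rayleigh quotient over `Z \ {0}` equals `max_i μᵢ`. -/
theorem stmt_17 (N : ℕ) (μ : Fin (N + 1) → ℝ) (Z : Set (Fin (N + 1) → ℂ))
    (hZne : Z.Nonempty) (hZcl : IsClosed Z)
    (hcone : ∀ z ∈ Z, ∀ c : ℂ, c • z ∈ Z)
    (hinv : ∀ t : ℝ, ∀ z ∈ Z, (fun i => (Real.exp (μ i * t) : ℂ) * z i) ∈ Z)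
    (i₀ : Fin (N + 1)) (hmax : μ i₀ = Finset.univ.sup' Finset.univ_nonempty μ)
    (hnot : ∃ z ∈ Z, z i₀ ≠ 0) :
    sSup {r : ℝ | ∃ z ∈ Z, z ≠ 0 ∧
        r = (∑ i, μ i * ‖z i‖ ^ 2) / (∑ i, ‖z i‖ ^ 2)} =
      Finset.univ.sup' Finset.univ_nonempty μ :=
  stmt_17_general N μ Z hinv i₀ hmax hnot
end
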